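/- arXiv:2309.14898 — 4 statements merged into one kernel-verified Lean document; each statement's English description precedes it below -/
import Mathlib

section
/- Let Q be a quasi-crystal graph of type A_{n−1} satisfying axioms LQ1 and LQ2 and such that ε̈_i(x), φ̈_i(x) ∈ ℤ_{≥0} ∪ {+∞} for all x ∈ Q and i ∈ I. Let i, j ∈ I, x, y ∈ Q, and suppose ë_i(x) = y. Then: (1) if |i−j| > 1, then ε̈_j(y) = ε̈_j(x) and φ̈_j(y) = φ̈_j(x); (2) for j = i+1: (a) if ε̈_{i+1}(x) ≠ +∞, then ε̈_{i+1}(y) = ε̈_{i+1}(x) and φ̈_{i+1}(y) = φ̈_{i+1}(x) − 1; (b) if ε̈_{i+1}(x) = +∞ and ε̈_i(y) > 0, then ε̈_{i+1}(y) = ε̈_{i+1}(x) = +∞ and φ̈_{i+1}(y) = φ̈_{i+1}(x) = +∞; (c) if ε̈_{i+1}(x) = +∞ and ε̈_i(y) = 0, then ε̈_{i+1}(y) = −⟨wt(y), α_{i+1}⟩ > 0 and φ̈_{i+1}(y) = 0; (3) for j = i−1: (a) if φ̈_{i−1}(y) ≠ +∞, then ε̈_{i−1}(x) = ε̈_{i−1}(y)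 − 1 and φ̈_{i−1}(x) = φ̈_{i−1}(y); (b) if φ̈_{i−1}(y) = +∞ and φ̈_i(x) > 0, then ε̈_{i−1}(x) = ε̈_{i−1}(y) = +∞ and φ̈_{i−1}(x) = φ̈_{i−1}(y) = +∞; (c) if φ̈_{i−1}(y) = +∞ and φ̈_i(x) = 0, then ε̈_{i−1}(x) = 0 and φ̈_{i−1}(x) = ⟨wt(x), α_{i−1}⟩ > 0. -/
open scoped Classical

/-- Integers together with `-∞` (written `⊥`) and `+∞`. -/
abbrev ZE := WithBot (WithTop ℤ)

/-- The canonical inclusion of an integer into `ZE`. -/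
def ZE.ofInt (m : ℤ) : ZE := ((m : WithTop ℤ) : ZE)

/-- The element `+∞` of `ZE`. -/
def ZE.top : ZE := ((⊤ : WithTop ℤ) : ZE)

/-- Raw data of a quasi-crystal of type `A_{n-1}`.  Indices are 0-based, so the index
set `I = {1, …, n-1}` of the paper corresponds to `{i : ℕ | i + 1 < n}`, and weights
in `ℤ^n` are represented as functions `ℕ → ℤ` (entries with index `≥ n` play no role). -/
structure QCData (n : ℕ) (Q : Type*) where
  e : ℕ → Q → Option Q
  f : ℕ → Q → Option Q
  eps : ℕ → Q → ZE
  phi : ℕ → Q → ZE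
  wt : Q → ℕ → ℤ

namespace QCData

variable {n : ℕ} {Q Q' : Type*}

/-- The simple root `α_i = e_i - e_{i+1}` (0-based coordinates). -/
def alpha (i : ℕ) : ℕ → ℤ := fun m => if m = i then 1 else if m = i + 1 then -1 else 0

/-- `⟨w, α_i⟩ = w_i - w_{i+1}` (which equals `⟨w, α_i^∨⟩` in type `A`). -/
def pair (w : ℕ → ℤ) (i : ℕ) : ℤ := w i - w (i + 1)

/-- Axioms Q1–Q4 of a quasi-crystal of type `A_{n-1}` (Definition 3.1). -/
def IsQC (D : QCData n Q) : Prop :=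
  (∀ i x y, i + 1 < n → (D.e i x = some y ↔ D.f i y = some x)) ∧
  (∀ i x y, i + 1 < n → D.e i x = some y →
    (∀ m, D.wt y m = D.wt x m + alpha i m) ∧
    D.eps i x = D.eps i y + 1 ∧ D.phi i y = D.phi i x + 1) ∧
  (∀ i x, i + 1 < n → D.phi i x = D.eps i x + ZE.ofInt (pair (D.wt x) i)) ∧
  (∀ i x, i + 1 < n → D.eps i x = ⊥ → D.e i x = none ∧ D.f i x = none) ∧
  (∀ i x, i + 1 < n → D.eps i x = ZE.top → D.e i x = none ∧ D.f i x = none)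

/-- Iterated raising operator `ë_i^k`. -/
def eIter (D : QCData n Q) (i : ℕ) : ℕ → Q → Option Q
  | 0, x => some x
  | k + 1, x => (eIter D i k x).bind (D.e i)

/-- Iterated lowering operator `f̈_i^k`. -/
def fIter (D : QCData n Q) (i : ℕ) : ℕ → Q → Option Q
  | 0, x => some x
  | k + 1, x => (fIter D i k x).bind (D.f i)

/-- Seminormality: whenever `ε̈_i(x) ≠ +∞`, `ε̈_i(x) = max {k : ë_i^k(x) ≠ ⊥}` and
`φ̈_i(x) = max {k : f̈_i^k(x) ≠ ⊥}`. -/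
def Seminormal (D : QCData n Q) : Prop :=
  ∀ i x, i + 1 < n → D.eps i x ≠ ZE.top →
    (∃ k : ℕ, D.eps i x = ZE.ofInt k ∧ D.eIter i k x ≠ none ∧ D.eIter i (k + 1) x = none) ∧
    (∃ k : ℕ, D.phi i x = ZE.ofInt k ∧ D.fIter i k x ≠ none ∧ D.fIter i (k + 1) x = none)

/-- Local axiom LQ1. -/
def LQ1 (D : QCData n Q) : Prop :=
  ∀ i x, i + 2 < n → (D.eps i x = 0 ↔ D.phi (i + 1) x = 0)

/-- Local axiom LQ2 (its three parts). -/
def LQ2 (D : QCData n Q) : Prop :=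
  ∀ i x y, i + 1 < n → D.e i x = some y →
    (∀ j, j + 1 < n → (i + 1 < j ∨ j + 1 < i) → D.eps j x = D.eps j y) ∧
    (i + 2 < n →
      (D.eps (i + 1) x ≠ D.eps (i + 1) y ↔ D.eps (i + 1) x = ZE.top ∧ D.eps i y = 0) ∧
      (D.eps (i + 1) x ≠ D.eps (i + 1) y → D.eps (i + 1) y ≠ 0)) ∧
    (∀ j, j + 1 = i →
      (D.phi j x ≠ D.phi j y ↔ D.phi j y = ZE.top ∧ D.phi i x = 0) ∧
      (D.phi j x ≠ D.phi j y → D.phi j x ≠ 0))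

/-- Local axiom LQ3. -/
def LQ3 (D : QCData n Q) : Prop :=
  ∀ i j x, i ≠ j → i + 1 < n → j + 1 < n → D.e i x ≠ none → D.e j x ≠ none →
    (D.e j x).bind (D.e i) = (D.e i x).bind (D.e j) ∧ (D.e j x).bind (D.e i) ≠ none

/-- Local axiom LQ3'. -/
def LQ3' (D : QCData n Q) : Prop :=
  ∀ i j x, i ≠ j → i + 1 < n → j + 1 < n → D.f i x ≠ none → D.f j x ≠ none →
    (D.f j x).bind (D.f i) = (D.f i x).bind (D.f j) ∧ (D.f j x).bind (D.f i) ≠ none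

/-- Stembridge axiom S1 (for type `A_{n-1}`: `α_i ⊥ α_j` iff `|i-j| > 1`). -/
def S1 (D : QCData n Q) : Prop :=
  ∀ i j x y, i + 1 < n → j + 1 < n → i ≠ j → D.e i x = some y →
    (D.eps j y = D.eps j x ∨ D.eps j y = D.eps j x + 1) ∧
    ((i + 1 < j ∨ j + 1 < i) → D.eps j y = D.eps j x ∧ D.phi j y = D.phi j x)

/-- Stembridge axiom S2. -/
def S2 (D : QCData n Q) : Prop :=
  ∀ i j x y, i + 1 < n → j + 1 < n → i ≠ j → D.e i x = some y →
    D.eps j y = D.eps j x → 0 < D.eps j x →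
    ((D.e j x).bind (D.e i) = (D.e i x).bind (D.e j) ∧ (D.e j x).bind (D.e i) ≠ none) ∧
    (∀ z, D.e j x = some z → D.phi i z = D.phi i x)

/-- Stembridge axiom S2'. -/
def S2' (D : QCData n Q) : Prop :=
  ∀ i j x y, i + 1 < n → j + 1 < n → i ≠ j → D.f i x = some y →
    D.phi j y = D.phi j x → 0 < D.phi j x →
    ((D.f j x).bind (D.f i) = (D.f i x).bind (D.f j) ∧ (D.f j x).bind (D.f i) ≠ none) ∧
    (∀ z, D.f j x = some z → D.eps i z = D.eps i x)

/-- Stembridge axiom S3. -/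
def S3 (D : QCData n Q) : Prop :=
  ∀ i j x y z, i + 1 < n → j + 1 < n → i ≠ j → D.e i x = some y → D.e j x = some z →
    D.eps j y = D.eps j x + 1 → D.eps i z = D.eps i x + 1 →
    ((((D.e i x).bind (D.e j)).bind (D.e j)).bind (D.e i) =
        (((D.e j x).bind (D.e i)).bind (D.e i)).bind (D.e j) ∧
      (((D.e i x).bind (D.e j)).bind (D.e j)).bind (D.e i) ≠ none) ∧
    (∀ w, ((D.e i x).bind (D.e j)).bind (D.e j) = some w → D.phi i z = D.phi i w) ∧
    (∀ w, ((D.e j x).bind (D.e i)).bind (D.e i) = some w → D.phi j y = D.phi j w)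

/-- Stembridge axiom S3'. -/
def S3' (D : QCData n Q) : Prop :=
  ∀ i j x y z, i + 1 < n → j + 1 < n → i ≠ j → D.f i x = some y → D.f j x = some z →
    D.phi j y = D.phi j x + 1 → D.phi i z = D.phi i x + 1 →
    ((((D.f i x).bind (D.f j)).bind (D.f j)).bind (D.f i) =
        (((D.f j x).bind (D.f i)).bind (D.f i)).bind (D.f j) ∧
      (((D.f i x).bind (D.f j)).bind (D.f j)).bind (D.f i) ≠ none) ∧
    (∀ w, ((D.f i x).bind (D.f j)).bind (D.f j) = some w → D.eps i z = D.eps i w) ∧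
    (∀ w, ((D.f j x).bind (D.f i)).bind (D.f i) = some w → D.eps j y = D.eps j w)

/-- `D` is a crystal: a quasi-crystal in which `ε̈_i, φ̈_i` never take the value `+∞`. -/
def IsCrystal (D : QCData n Q) : Prop :=
  IsQC D ∧ ∀ i x, i + 1 < n → D.eps i x ≠ ZE.top ∧ D.phi i x ≠ ZE.top

/-- A Stembridge crystal: a seminormal crystal satisfying S1, S2, S2', S3, S3'. -/
def IsStembridge (D : QCData n Q) : Prop :=
  IsCrystal D ∧ Seminormal D ∧ S1 D ∧ S2 D ∧ S2' D ∧ S3 D ∧ S3' D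

/-- Highest weight element. -/
def HW (D : QCData n Q) (u : Q) : Prop := ∀ i, i + 1 < n → D.e i u = none

/-- A single raising step. -/
def estep (D : QCData n Q) (a b : Q) : Prop := ∃ i, i + 1 < n ∧ D.e i a = some b

/-- The partial order `x ⪯ y`: `y` is obtained from `x` by applying raising operators. -/
def hwle (D : QCData n Q) (x y : Q) : Prop := Relation.ReflTransGen (estep D) x y

/-- A single step in the quasi-crystal graph (in either direction). -/
def step (D : QCData n Q) (a b : Q) : Prop :=
  ∃ i, i + 1 < n ∧ (D.e i a = some b ∨ D.f i a = some b)

/-- Connectedness of the quasi-crystal graph. -/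
def Connected (D : QCData n Q) : Prop := ∀ x y, Relation.ReflTransGen (step D) x y

/-- The quasi-tensor product of Cain–Guilherme–Malheiro. -/
noncomputable def tensor (A : QCData n Q) (B : QCData n Q') : QCData n (Q × Q') where
  e := fun i p =>
    if 0 < A.phi i p.1 ∧ 0 < B.eps i p.2 then none
    else if B.eps i p.2 ≤ A.phi i p.1 then (A.e i p.1).map (fun y => (y, p.2))
    else (B.e i p.2).map (fun y => (p.1, y))
  f := fun i p =>
    if 0 < A.phi i p.1 ∧ 0 < B.eps i p.2 then none
    else if B.eps i p.2 < A.phi i p.1 then (A.f i p.1).map (fun y => (y, p.2))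
    else (B.f i p.2).map (fun y => (p.1, y))
  eps := fun i p =>
    if 0 < A.phi i p.1 ∧ 0 < B.eps i p.2 then ZE.top
    else max (A.eps i p.1) (B.eps i p.2 + ZE.ofInt (-(pair (A.wt p.1) i)))
  phi := fun i p =>
    if 0 < A.phi i p.1 ∧ 0 < B.eps i p.2 then ZE.top
    else max (A.phi i p.1 + ZE.ofInt (pair (B.wt p.2) i)) (B.phi i p.2)
  wt := fun p m => A.wt p.1 m + B.wt p.2 m

/-- The standard crystal `B_n` of type `A_{n-1}` (elements `0, …, n-1`, 0-based). -/
def stdB (n : ℕ) : QCData n (Fin n) where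
  e := fun i x => if h : (x : ℕ) = i + 1 then some ⟨i, by have := x.isLt; omega⟩ else none
  f := fun i x => if h : (x : ℕ) = i ∧ i + 1 < n then some ⟨i + 1, h.2⟩ else none
  eps := fun i x => if (x : ℕ) = i + 1 then 1 else 0
  phi := fun i x => if (x : ℕ) = i then 1 else 0
  wt := fun x m => if m = (x : ℕ) then 1 else 0

/-- The `(k+1)`-fold quasi-tensor power `B_n^{⊗̈ (k+1)}` of the standard crystal. -/
noncomputable def stdPow (n : ℕ) : (k : ℕ) → Σ T : Type, QCData n T
  | 0 => ⟨Fin n, stdB n⟩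
  | k + 1 => ⟨(stdPow n k).1 × Fin n, tensor (stdPow n k).2 (stdB n)⟩

/-- The quasi-crystal `Q_C` obtained from a crystal `C` (Definition 4.6). -/
def crystalToQC (D : QCData n Q) : QCData n Q where
  e := fun i x => if D.eps i x = ZE.ofInt (D.wt x (i + 1)) then D.e i x else none
  f := fun i x =>
    (D.f i x).bind fun y => if D.eps i y = ZE.ofInt (D.wt y (i + 1)) then some y else none
  eps := fun i x => if D.eps i x = ZE.ofInt (D.wt x (i + 1)) then D.eps i x else ZE.top
  phi := fun i x =>
    (if D.eps i x = ZE.ofInt (D.wt x (i + 1)) then D.eps i x else ZE.top) +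
      ZE.ofInt (pair (D.wt x) i)
  wt := D.wt

end QCData

open QCData


lemma ZEaux.zero_eq : (0 : ZE) = ZE.ofInt 0 := rfl
lemma ZEaux.one_eq : (1 : ZE) = ZE.ofInt 1 := rfl
lemma ZEaux.ofInt_add (a b : ℤ) : ZE.ofInt a + ZE.ofInt b = ZE.ofInt (a + b) := by
  simp [ZE.ofInt, ← WithBot.coe_add, ← WithTop.coe_add]
lemma ZEaux.top_add (m : ℤ) : ZE.top + ZE.ofInt m = ZE.top := by
  rw [ZE.top, ZE.ofInt, ← WithBot.coe_add, WithTop.top_add]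
lemma ZEaux.ofInt_ne_top (m : ℤ) : ZE.ofInt m ≠ ZE.top := by
  simp [ZE.ofInt, ZE.top]
lemma ZEaux.ofInt_inj {a b : ℤ} (h : ZE.ofInt a = ZE.ofInt b) : a = b := by
  simpa [ZE.ofInt] using h
lemma ZEaux.trichotomy (z : ZE) : z = ⊥ ∨ z = ZE.top ∨ ∃ m : ℤ, z = ZE.ofInt m := by
  rcases z with _ | (_ | m)
  · left; rfl
  · right; left; rfl
  · right; right; exact ⟨m, rfl⟩
lemma ZEaux.ne_bot_of_nonneg {z : ZE} (h : 0 ≤ z) : z ≠ ⊥ := by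
  intro hb; rw [hb] at h; simp at h
lemma ZEaux.ofInt_nonneg {m : ℤ} (h : 0 ≤ ZE.ofInt m) : 0 ≤ m := by
  rw [ZEaux.zero_eq, ZE.ofInt, ZE.ofInt] at h
  exact_mod_cast h
lemma ZEaux.ofInt_pos {m : ℤ} (h : 0 < m) : 0 < ZE.ofInt m := by
  rw [ZEaux.zero_eq, ZE.ofInt, ZE.ofInt]
  exact_mod_cast h
lemma ZEaux.add_eq_top {z : ZE} (hz : z ≠ ⊥) {p : ℤ} (h : z + ZE.ofInt p = ZE.top) :
    z = ZE.top := by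
  rcases ZEaux.trichotomy z with h0 | h0 | ⟨m, h0⟩
  · exact absurd h0 hz
  · exact h0
  · rw [h0, ZEaux.ofInt_add] at h; exact absurd h (ZEaux.ofInt_ne_top _)
lemma ZEaux.add_eq_ofInt {z : ZE} (hz : z ≠ ⊥) {p q : ℤ} (h : z + ZE.ofInt p = ZE.ofInt q) :
    z = ZE.ofInt (q - p) := by
  rcases ZEaux.trichotomy z with h0 | h0 | ⟨m, h0⟩
  · exact absurd h0 hz
  · rw [h0, ZEaux.top_add] at h; exact absurd h.symm (ZEaux.ofInt_ne_top _)
  · rw [h0, ZEaux.ofInt_add] at h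
    have := ZEaux.ofInt_inj h
    rw [h0]; congr 1; omega

/-- Proposition 3.5: consequences of LQ1 and LQ2 for quasi-crystal graphs whose
length functions take values in `ℤ_{≥0} ∪ {+∞}`. -/
theorem stmt1 {n : ℕ} {Q : Type*} (D : QCData n Q)
    (hQC : D.IsQC) (h1 : D.LQ1) (h2 : D.LQ2)
    (hnn : ∀ i x, i + 1 < n → 0 ≤ D.eps i x ∧ 0 ≤ D.phi i x)
    (i : ℕ) (hi : i + 1 < n) (x y : Q) (hxy : D.e i x = some y) :
    (∀ j, j + 1 < n → (i + 1 < j ∨ j + 1 < i) →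
      D.eps j y = D.eps j x ∧ D.phi j y = D.phi j x) ∧
    (i + 2 < n →
      (D.eps (i + 1) x ≠ ZE.top →
        D.eps (i + 1) y = D.eps (i + 1) x ∧
        D.phi (i + 1) y = D.phi (i + 1) x + ZE.ofInt (-1)) ∧
      (D.eps (i + 1) x = ZE.top → 0 < D.eps i y →
        D.eps (i + 1) y = ZE.top ∧ D.phi (i + 1) y = ZE.top ∧ D.phi (i + 1) x = ZE.top) ∧
      (D.eps (i + 1) x = ZE.top → D.eps i y = 0 →
        D.eps (i + 1) y = ZE.ofInt (-(pair (D.wt y) (i + 1))) ∧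
        0 < D.eps (i + 1) y ∧ D.phi (i + 1) y = 0)) ∧
    (∀ k, k + 1 = i →
      (D.phi k y ≠ ZE.top →
        D.eps k x = D.eps k y + ZE.ofInt (-1) ∧ D.phi k x = D.phi k y) ∧
      (D.phi k y = ZE.top → 0 < D.phi i x →
        D.eps k x = ZE.top ∧ D.eps k y = ZE.top ∧ D.phi k x = ZE.top) ∧
      (D.phi k y = ZE.top → D.phi i x = 0 →
        D.eps k x = 0 ∧ D.phi k x = ZE.ofInt (pair (D.wt x) k) ∧ 0 < D.phi k x)) := by
  obtain ⟨hq1, hq2, hq3, hq4, hq5⟩ := hQC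
  obtain ⟨hw, heps, hphi⟩ := hq2 i x y hi hxy
  obtain ⟨hl1, hl2, hl3⟩ := h2 i x y hi hxy
  refine ⟨?_, ?_, ?_⟩
  · -- part (1)
    intro j hj hfar
    have hee := hl1 j hj hfar
    have hpair : pair (D.wt y) j = pair (D.wt x) j := by
      rcases hfar with hf | hf <;>
      · simp only [pair, hw, alpha]
        rw [if_neg (by omega), if_neg (by omega), if_neg (by omega), if_neg (by omega)]
        ring
    refine ⟨hee.symm, ?_⟩
    rw [hq3 j y hj, hq3 j x hj, hee, hpair]
  · -- part (2)
    intro h2n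
    obtain ⟨hiff, hne0⟩ := hl2 h2n
    have hj1 : i + 1 + 1 < n := by omega
    have hpair1 : pair (D.wt y) (i + 1) = pair (D.wt x) (i + 1) - 1 := by
      simp only [pair, hw, alpha]
      rw [if_neg (by omega), if_pos trivial, if_neg (by omega), if_neg (by omega)]
      ring
    refine ⟨?_, ?_, ?_⟩
    · intro ht
      have heq : D.eps (i + 1) x = D.eps (i + 1) y := by
        by_contra hne
        exact ht (hiff.mp hne).1
      rcases ZEaux.trichotomy (D.eps (i + 1) x) with h0 | h0 | ⟨m, h0⟩
      · exact absurd h0 (ZEaux.ne_bot_of_nonneg (hnn (i + 1) x hj1).1)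
      · exact absurd h0 ht
      · refine ⟨heq.symm, ?_⟩
        rw [hq3 (i + 1) y hj1, hq3 (i + 1) x hj1, ← heq, h0, hpair1, ZEaux.ofInt_add,
          ZEaux.ofInt_add, ZEaux.ofInt_add]
        congr 1; ring
    · intro ht hpos
      have heq : D.eps (i + 1) x = D.eps (i + 1) y := by
        by_contra hne
        have h00 := (hiff.mp hne).2
        rw [h00] at hpos; exact lt_irrefl _ hpos
      have hey : D.eps (i + 1) y = ZE.top := heq.symm.trans ht
      have h1' : D.phi (i + 1) y = ZE.top := by
        rw [hq3 (i + 1) y hj1, hey, ZEaux.top_add]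
      have h2' : D.phi (i + 1) x = ZE.top := by
        rw [hq3 (i + 1) x hj1, ht, ZEaux.top_add]
      exact ⟨hey, h1', h2'⟩
    · intro ht h0
      have hphiy : D.phi (i + 1) y = 0 := (h1 i y h2n).mp h0
      have hqy := hq3 (i + 1) y hj1
      rw [hphiy] at hqy
      have hne : D.eps (i + 1) y ≠ ⊥ := ZEaux.ne_bot_of_nonneg (hnn (i + 1) y hj1).1
      have heq : D.eps (i + 1) y = ZE.ofInt (0 - pair (D.wt y) (i + 1)) :=
        ZEaux.add_eq_ofInt hne (hqy.symm.trans ZEaux.zero_eq)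
      have heq' : D.eps (i + 1) y = ZE.ofInt (-(pair (D.wt y) (i + 1))) := by
        rw [heq]; congr 1; ring
      refine ⟨heq', ?_, hphiy⟩
      have hnz : D.eps (i + 1) y ≠ 0 := by
        apply hne0
        rw [ht, heq']
        exact (ZEaux.ofInt_ne_top _).symm
      have hge := (hnn (i + 1) y hj1).1
      rw [heq'] at hge hnz ⊢
      have hmge := ZEaux.ofInt_nonneg hge
      have hmnz : -(pair (D.wt y) (i + 1)) ≠ 0 := by
        intro hc
        exact hnz (by rw [hc]; rfl)
      exact ZEaux.ofInt_pos (by omega)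
  · -- part (3)
    intro k hk
    subst hk
    obtain ⟨hiff, hne0⟩ := hl3 k rfl
    have hkn : k + 1 < n := by omega
    have hpairk : pair (D.wt y) k = pair (D.wt x) k - 1 := by
      simp only [pair, hw, alpha]
      rw [if_neg (by omega), if_neg (by omega), if_pos trivial]
      ring
    have hbx : D.eps k x ≠ ⊥ := ZEaux.ne_bot_of_nonneg (hnn k x hkn).1
    have hby : D.eps k y ≠ ⊥ := ZEaux.ne_bot_of_nonneg (hnn k y hkn).1
    have hqx := hq3 k x hkn
    have hqy := hq3 k y hkn
    refine ⟨?_, ?_, ?_⟩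
    · intro ht
      have heq : D.phi k x = D.phi k y := by
        by_contra hne
        exact ht (hiff.mp hne).1
      rcases ZEaux.trichotomy (D.eps k y) with h0 | h0 | ⟨m', h0⟩
      · exact absurd h0 hby
      · rw [h0, ZEaux.top_add] at hqy
        exact absurd hqy ht
      · rcases ZEaux.trichotomy (D.eps k x) with hx0 | hx0 | ⟨m, hx0⟩
        · exact absurd hx0 hbx
        · rw [hx0, ZEaux.top_add] at hqx
          exact absurd (heq.symm.trans hqx) ht
        · have hmm : m + pair (D.wt x) k = m' + pair (D.wt y) k := by
            apply ZEaux.ofInt_inj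
            rw [← ZEaux.ofInt_add, ← ZEaux.ofInt_add, ← hx0, ← h0, ← hqx, ← hqy]
            exact heq
          rw [hpairk] at hmm
          refine ⟨?_, heq⟩
          rw [hx0, h0, ZEaux.ofInt_add]
          congr 1; omega
    · intro ht hpos
      have heq : D.phi k x = D.phi k y := by
        by_contra hne
        have h00 := (hiff.mp hne).2
        rw [h00] at hpos; exact lt_irrefl _ hpos
      have hphix : D.phi k x = ZE.top := heq.trans ht
      exact ⟨ZEaux.add_eq_top hbx (hqx.symm.trans hphix),
        ZEaux.add_eq_top hby (hqy.symm.trans ht), hphix⟩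
    · intro ht h0
      have hex : D.eps k x = 0 := (h1 k x (by omega)).mpr h0
      rw [hex, ZEaux.zero_eq, ZEaux.ofInt_add] at hqx
      have hphix : D.phi k x = ZE.ofInt (pair (D.wt x) k) := by
        rw [hqx]; congr 1; ring
      refine ⟨hex, hphix, ?_⟩
      have hnz : D.phi k x ≠ 0 := by
        apply hne0
        rw [hphix, ht]
        exact ZEaux.ofInt_ne_top _
      have hge := (hnn k x hkn).2
      rw [hphix] at hge hnz ⊢
      have hpge := ZEaux.ofInt_nonneg hge
      have hpnz : pair (D.wt x) k ≠ 0 := by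
        intro hc
        exact hnz (by rw [hc]; rfl)
      exact ZEaux.ofInt_pos (by omega)
end

section
/- Let Q be a nonempty, connected quasi-crystal graph of type A_{n−1} satisfying the local quasi-crystal axioms LQ1, LQ2, LQ3 and LQ3', and suppose Q is bounded above, i.e. for every x ∈ Q there exists a highest weight element x_h ∈ Q with x ⪯ x_h. Then Q has exactly one highest weight element. -/
open scoped Classical

open QCData

/-- Theorem 3.9: a non-empty, bounded above, connected quasi-crystal graph
satisfying the local quasi-crystal axioms has a unique highest weight element. -/
theorem stmt4 {n : ℕ} {Q : Type*} [Nonempty Q] (D : QCData n Q)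
    (hQC : D.IsQC) (h1 : D.LQ1) (h2 : D.LQ2) (h3 : D.LQ3) (h3' : D.LQ3')
    (hconn : D.Connected)
    (hba : ∀ x, ∃ u, D.HW u ∧ D.hwle x u) :
    ∃! u, D.HW u := by
  -- diamond property of `estep`
  have diamond : ∀ a b c, D.estep a b → D.estep a c →
      ∃ d, Relation.ReflGen (D.estep) b d ∧ Relation.ReflTransGen (D.estep) c d := by
    rintro a b c ⟨i, hi, hib⟩ ⟨j, hj, hjc⟩
    by_cases hij : i = j
    · subst hij
      rw [hib] at hjc
      exact ⟨b, Relation.ReflGen.refl, by simp_all [Relation.ReflTransGen.refl]⟩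
    · obtain ⟨heq, hne⟩ := h3 i j a hij hi hj (by simp [hib]) (by simp [hjc])
      rw [hjc, hib] at heq
      rw [hjc] at hne
      simp only [Option.bind_some] at heq hne
      obtain ⟨d, hd⟩ := Option.ne_none_iff_exists'.mp hne
      refine ⟨d, Relation.ReflGen.single ⟨j, hj, ?_⟩,
        Relation.ReflTransGen.single ⟨i, hi, hd⟩⟩
      rw [← heq]; exact hd
  -- no steps out of a HW element
  have hwstop : ∀ u w, D.HW u → D.hwle u w → w = u := by
    intro u w hu hw
    rcases Relation.ReflTransGen.cases_head hw with h | ⟨c, ⟨i, hi, hc⟩, _⟩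
    · exact h.symm
    · exact absurd hc (by rw [hu i hi]; simp)
  -- uniqueness of HW above a fixed element
  have uniqAbove : ∀ x u v, D.HW u → D.HW v → D.hwle x u → D.hwle x v → u = v := by
    intro x u v hu hv hxu hxv
    obtain ⟨w, huw, hvw⟩ := Relation.church_rosser diamond hxu hxv
    rw [hwstop u w hu huw] at hvw
    exact hwstop v u hv hvw
  -- a single step preserves the HW above
  have stepHW : ∀ y z u v, D.step y z → D.HW u → D.HW v → D.hwle y u → D.hwle z v →
      u = v := by
    rintro y z u v ⟨i, hi, he | hf⟩ hu hv hyu hzv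
    · exact uniqAbove y u v hu hv hyu
        (Relation.ReflTransGen.head ⟨i, hi, he⟩ hzv)
    · have he : D.e i z = some y := (hQC.1 i z y hi).mpr hf
      exact uniqAbove z u v hu hv
        (Relation.ReflTransGen.head ⟨i, hi, he⟩ hyu) hzv
  -- HW above is constant along paths
  have pathHW : ∀ x y, Relation.ReflTransGen (D.step) x y →
      ∀ u v, D.HW u → D.HW v → D.hwle x u → D.hwle y v → u = v := by
    intro x y hxy
    induction hxy with
    | refl => intro u v hu hv hxu hxv; exact uniqAbove x u v hu hv hxu hxv
    | tail hxb hbz ih =>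
      rename_i b z
      intro u v hu hv hxu hzv
      obtain ⟨w, hw, hbw⟩ := hba b
      exact (ih u w hu hw hxu hbw).trans (stepHW b z w v hbz hw hv hbw hzv)
  obtain ⟨x⟩ := ‹Nonempty Q›
  obtain ⟨u, hu, hxu⟩ := hba x
  refine ⟨u, hu, fun v hv => ?_⟩
  exact (pathHW x v (hconn x v) u v hu hv hxu Relation.ReflTransGen.refl).symm
end

section
/- Let Q be a connected component of a seminormal quasi-crystal graph of type A_{n−1} satisfying the local quasi-crystal axioms LQ1, LQ2, LQ3 and LQ3', with highest weight element u. Then u has degree at most one in the quasi-crystal graph: there is at most one index i ∈ I with f̈_i(u) ≠ ⊥. -/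
open scoped Classical

open QCData

lemma ZEaux_ofInt_zero : ZE.ofInt 0 = 0 := rfl

lemma ZEaux_ofInt_nat_ne_zero (k : ℕ) : ZE.ofInt ((k : ℤ) + 1) ≠ 0 := by
  simp only [ZE.ofInt]
  intro h
  have : ((k : ℤ) + 1 : WithTop ℤ) = (0 : WithTop ℤ) := by exact_mod_cast h
  have : (k : ℤ) + 1 = 0 := by exact_mod_cast this
  omega

lemma eIter_none_aux {n : ℕ} {Q : Type*} (D : QCData n Q) {i : ℕ} {u : Q}
    (h : D.e i u = none) : ∀ k, D.eIter i (k + 1) u = none := by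
  intro k
  induction k with
  | zero => simp [QCData.eIter, h]
  | succ k ih =>
      show (D.eIter i (k + 1) u).bind (D.e i) = none
      rw [ih]; rfl

lemma eps_zero_aux {n : ℕ} {Q : Type*} (D : QCData n Q) (hsn : D.Seminormal)
    {i : ℕ} {u : Q} (hi : i + 1 < n) (htop : D.eps i u ≠ ZE.top)
    (he : D.e i u = none) : D.eps i u = 0 := by
  obtain ⟨⟨k, hk, hne, _⟩, _⟩ := hsn i u hi htop
  cases k with
  | zero => rw [hk]; exact ZEaux_ofInt_zero
  | succ k => exact absurd (eIter_none_aux D he k) hne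

lemma phi_ne_zero_aux {n : ℕ} {Q : Type*} (D : QCData n Q) (hsn : D.Seminormal)
    {i : ℕ} {u : Q} (hi : i + 1 < n) (htop : D.eps i u ≠ ZE.top)
    (hf : D.f i u ≠ none) : D.phi i u ≠ 0 := by
  obtain ⟨_, ⟨k, hk, hne, hend⟩⟩ := hsn i u hi htop
  cases k with
  | zero =>
      exfalso; apply hf
      simpa [QCData.fIter] using hend
  | succ k =>
      rw [hk]
      exact_mod_cast ZEaux_ofInt_nat_ne_zero k

lemma eps_finite_of_phi_zero {n : ℕ} {Q : Type*} (D : QCData n Q) (hQC : D.IsQC)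
    {i : ℕ} {u : Q} (hi : i + 1 < n) (hphi : D.phi i u = 0) :
    D.eps i u ≠ ZE.top ∧ D.eps i u ≠ ⊥ := by
  have hq2 := hQC.2.2.1 i u hi
  constructor
  · intro h
    rw [h] at hq2
    rw [hq2] at hphi
    simp only [ZE.top, ZE.ofInt] at hphi
    rw [← WithBot.coe_add] at hphi
    rw [WithTop.top_add] at hphi
    exact absurd hphi (by decide)
  · intro h
    rw [h] at hq2
    rw [hq2] at hphi
    simp at hphi

lemma main_aux {n : ℕ} {Q : Type*} (D : QCData n Q)
    (hQC : D.IsQC) (hsn : D.Seminormal) (h1 : D.LQ1)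
    (u : Q) (hu : D.HW u) {i j : ℕ} (hij : i < j) (hj : j + 1 < n)
    (hfi : D.f i u ≠ none) (hfj : D.f j u ≠ none) : False := by
  have hi : i + 1 < n := by omega
  -- ε_i(u) is finite
  have hitop : D.eps i u ≠ ZE.top := fun h => hfi (hQC.2.2.2.2 i u hi h).2
  have hjtop : D.eps j u ≠ ZE.top := fun h => hfj (hQC.2.2.2.2 j u hj h).2
  have hieps : D.eps i u = 0 := eps_zero_aux D hsn hi hitop (hu i hi)
  have hjphi : D.phi j u ≠ 0 := phi_ne_zero_aux D hsn hj hjtop hfj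
  -- chain: for all i+1 ≤ m ≤ j, φ_m(u) = 0
  have chain : ∀ m, i + 1 ≤ m → m ≤ j → D.phi m u = 0 := by
    intro m hm
    induction m, hm using Nat.le_induction with
    | base =>
        intro hle
        exact (h1 i u (by omega)).mp hieps
    | succ m hm ih =>
        intro hle
        have hphim : D.phi m u = 0 := ih (by omega)
        have hmn : m + 1 < n := by omega
        have hfin := eps_finite_of_phi_zero D hQC hmn hphim
        have hepsm : D.eps m u = 0 := eps_zero_aux D hsn hmn hfin.1 (hu m hmn)
        exact (h1 m u (by omega)).mp hepsm
  exact hjphi (chain j (by omega) le_rfl)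

/-- Proposition 3.11: the highest weight element of a connected (component of a)
seminormal quasi-crystal graph satisfying the local axioms has degree at most one. -/
theorem stmt6 {n : ℕ} {Q : Type*} (D : QCData n Q)
    (hQC : D.IsQC) (hsn : D.Seminormal)
    (h1 : D.LQ1) (h2 : D.LQ2) (h3 : D.LQ3) (h3' : D.LQ3') (hconn : D.Connected)
    (u : Q) (hu : D.HW u) :
    ∀ i j, i + 1 < n → j + 1 < n → D.f i u ≠ none → D.f j u ≠ none → i = j := by
  intro i j hi hj hfi hfj
  by_contra hne
  rcases Nat.lt_or_ge i j with h | h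
  · exact absurd (main_aux D hQC hsn h1 u hu h hj hfi hfj) not_false
  · have h' : j < i := by omega
    exact absurd (main_aux D hQC hsn h1 u hu h' hi hfj hfi) not_false
end

section
/- Let Q and Q' be seminormal quasi-crystal graphs of type A_{n−1} satisfying the local quasi-crystal axioms. Then the quasi-tensor product Q ⊗̈ Q' satisfies axiom LQ2: if ë_i(x ⊗̈ x') = y ⊗̈ y', then (1) ε̈_j(x ⊗̈ x') = ε̈_j(y ⊗̈ y') for all j with |i−j| > 1; (2) for i+1 ∈ I, ε̈_{i+1}(x ⊗̈ x') ≠ ε̈_{i+1}(y ⊗̈ y') if and only if (ε̈_{i+1}(x ⊗̈ x') = +∞ and ε̈_i(y ⊗̈ y') = 0), and in that case ε̈_{i+1}(y ⊗̈ y') ≠ 0; (3) for i−1 ∈ I, φ̈_{i−1}(x ⊗̈ x') ≠ φ̈_{i−1}(y ⊗̈ y') if and only if (φ̈_{i−1}(y ⊗̈ y') = +∞ and φ̈_i(x ⊗̈ x') = 0), and in that case φ̈_{i−1}(x ⊗̈ x') ≠ 0. -/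
open scoped Classical

open QCData

namespace ZEfacts
theorem zero_def : (0:ZE) = ZE.ofInt 0 := rfl
theorem one_def : (1:ZE) = ZE.ofInt 1 := rfl
@[simp] theorem ofInt_eq {a b : ℤ} : ZE.ofInt a = ZE.ofInt b ↔ a = b := by simp [ZE.ofInt]
@[simp] theorem ofInt_ne_top (a : ℤ) : ¬ ZE.ofInt a = ZE.top := by simp [ZE.ofInt, ZE.top]
@[simp] theorem top_ne_ofInt (a : ℤ) : ¬ ZE.top = ZE.ofInt a := by simp [ZE.ofInt, ZE.top]
@[simp] theorem add_ofInt (a b : ℤ) : ZE.ofInt a + ZE.ofInt b = ZE.ofInt (a+b) := by simp [ZE.ofInt]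
@[simp] theorem top_add (a : ℤ) : ZE.top + ZE.ofInt a = ZE.top := by
  show ((⊤:WithTop ℤ):ZE) + _ = _
  rw [ZE.ofInt, ← WithBot.coe_add, WithTop.top_add]; rfl
@[simp] theorem lt_iff {a b : ℤ} : ZE.ofInt a < ZE.ofInt b ↔ a < b := by simp [ZE.ofInt]
@[simp] theorem le_iff {a b : ℤ} : ZE.ofInt a ≤ ZE.ofInt b ↔ a ≤ b := by simp [ZE.ofInt]
@[simp] theorem lt_top (a : ℤ) : ZE.ofInt a < ZE.top := by
  rw [ZE.ofInt, ZE.top, WithBot.coe_lt_coe]; exact WithTop.coe_lt_top a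
@[simp] theorem not_top_le (a : ℤ) : ¬ ZE.top ≤ ZE.ofInt a := by simp [ZE.ofInt, ZE.top]
@[simp] theorem not_top_lt (a : ℤ) : ¬ ZE.top < ZE.ofInt a := by simp [ZE.ofInt, ZE.top]
@[simp] theorem le_top (a : ℤ) : ZE.ofInt a ≤ ZE.top := by simp [ZE.ofInt, ZE.top]
@[simp] theorem max_ofInt (a b : ℤ) : max (ZE.ofInt a) (ZE.ofInt b) = ZE.ofInt (max a b) := by
  simp [ZE.ofInt]
@[simp] theorem max_ofInt_top (a : ℤ) : max (ZE.ofInt a) ZE.top = ZE.top := by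
  simp [ZE.ofInt, ZE.top]
@[simp] theorem max_top_ofInt (a : ℤ) : max ZE.top (ZE.ofInt a) = ZE.top := by
  simp [ZE.ofInt, ZE.top]
theorem zero_lt_top : (0:ZE) < ZE.top := by rw [zero_def]; exact lt_top 0
end ZEfacts

open ZEfacts

section QCHelpers
variable {n : ℕ} {Q : Type*}

/-- In a seminormal quasi-crystal, eps/phi values are naturals or +∞, jointly. -/
theorem qc_vals {D : QCData n Q} (hQC : D.IsQC) (hsn : D.Seminormal) (i : ℕ) (x : Q)
    (hi : i + 1 < n) :
    (D.eps i x = ZE.top ∧ D.phi i x = ZE.top) ∨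
      ∃ k m : ℕ, D.eps i x = ZE.ofInt k ∧ D.phi i x = ZE.ofInt m := by
  by_cases h : D.eps i x = ZE.top
  · exact Or.inl ⟨h, by rw [hQC.2.2.1 i x hi, h, ZEfacts.top_add]⟩
  · obtain ⟨⟨k, hk, -, -⟩, ⟨m, hm, -, -⟩⟩ := hsn i x hi h
    exact Or.inr ⟨k, m, hk, hm⟩

/-- Facts about a single raising edge in a seminormal quasi-crystal. -/
theorem qc_edge {D : QCData n Q} (hQC : D.IsQC) (hsn : D.Seminormal) {i : ℕ} {x y : Q}
    (hi : i + 1 < n) (he : D.e i x = some y) :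
    ∃ k m : ℕ, D.eps i x = ZE.ofInt (k+1) ∧ D.eps i y = ZE.ofInt k ∧
      D.phi i x = ZE.ofInt m ∧ D.phi i y = ZE.ofInt (m+1) ∧
      (∀ m', D.wt y m' = D.wt x m' + alpha i m') ∧
      pair (D.wt x) i = (m : ℤ) - (k+1) := by
  have hq1 := hQC.2.1 i x y hi he
  rcases qc_vals hQC hsn i x hi with ⟨hex, -⟩ | ⟨K, M, hex, hpx⟩
  · exact absurd he (by rw [(hQC.2.2.2.2 i x hi hex).1]; simp)
  rcases qc_vals hQC hsn i y hi with ⟨hey, -⟩ | ⟨k, m', hey, hpy⟩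
  · rw [hey, hex, one_def, ZEfacts.top_add] at hq1
    exact absurd hq1.2.1 (by simp)
  have h1 : (K:ℤ) = k + 1 := by
    have := hq1.2.1; rw [hex, hey, one_def, ZEfacts.add_ofInt, ZEfacts.ofInt_eq] at this
    exact this
  have h2 : (m':ℤ) = M + 1 := by
    have := hq1.2.2; rw [hpx, hpy, one_def, ZEfacts.add_ofInt, ZEfacts.ofInt_eq] at this
    exact this
  have hpair : pair (D.wt x) i = (M : ℤ) - (k+1) := by
    have := hQC.2.2.1 i x hi
    rw [hex, hpx, ZEfacts.add_ofInt, ZEfacts.ofInt_eq, h1] at this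
    omega
  refine ⟨k, M, by rw [hex]; exact ZEfacts.ofInt_eq.mpr (by omega), hey, hpx,
    by rw [hpy]; exact ZEfacts.ofInt_eq.mpr (by omega), hq1.1, hpair⟩

/-- Pair change under a weight shift by alpha. -/
theorem pair_shift {w w' : ℕ → ℤ} (i j : ℕ) (h : ∀ m, w' m = w m + alpha i m) :
    pair w' j = pair w j + (alpha i j - alpha i (j+1)) := by
  simp only [pair, h]; ring

end QCHelpers


set_option maxHeartbeats 1000000 in
/-- Proposition 3.20: the quasi-tensor product satisfies axiom LQ2. -/
theorem stmt10 {n : ℕ} {Q Q' : Type*} (A : QCData n Q) (B : QCData n Q')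
    (hA : A.IsQC) (hAsn : A.Seminormal)
    (hA1 : A.LQ1) (hA2 : A.LQ2) (hA3 : A.LQ3) (hA3' : A.LQ3')
    (hB : B.IsQC) (hBsn : B.Seminormal)
    (hB1 : B.LQ1) (hB2 : B.LQ2) (hB3 : B.LQ3) (hB3' : B.LQ3') :
    (tensor A B).LQ2 := by
  intro i p q hi he
  obtain ⟨x, x'⟩ := p
  obtain ⟨y, y'⟩ := q
  simp only [tensor] at he
  split_ifs at he with hC hle
  · -- Case A : the operator acts on the first component
    rw [Option.map_eq_some_iff] at he
    obtain ⟨y0, heA, hp⟩ := he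
    obtain ⟨rfl, rfl⟩ : y = y0 ∧ y' = x' := by
      have := hp.symm; rw [Prod.mk.injEq] at this; exact this
    obtain ⟨k, m, hex, hey, hpx, hpy, hwt, hpxi⟩ := qc_edge hA hAsn hi heA
    obtain ⟨b0, c0, hbe, hbp⟩ :
        ∃ b0 c0 : ℕ, B.eps i y' = ZE.ofInt b0 ∧ B.phi i y' = ZE.ofInt c0 := by
      rcases qc_vals hB hBsn i y' hi with ⟨h1, h2⟩ | h
      · rw [h1, hpx] at hle; exact absurd hle (ZEfacts.not_top_le m)
      · exact h
    have hb0 : b0 = 0 := by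
      by_contra h
      rw [hbe, hpx, ZEfacts.le_iff] at hle
      refine hC ⟨?_, ?_⟩
      · rw [hpx, zero_def, ZEfacts.lt_iff]; omega
      · rw [hbe, zero_def, ZEfacts.lt_iff]; omega
    have hbe0 : B.eps i y' = ZE.ofInt 0 := by
      rw [hbe]; exact ZEfacts.ofInt_eq.mpr (by omega)
    have hpbi : pair (B.wt y') i = (c0 : ℤ) := by
      have hq := hB.2.2.1 i y' hi
      rw [hbe0, hbp, ZEfacts.add_ofInt, ZEfacts.ofInt_eq] at hq
      omega
    refine ⟨?_, ?_, ?_⟩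
    · -- part (1)
      intro j hj hfar
      have h1 := (hA2 i x y hi heA).1 j hj hfar
      have hpj : pair (A.wt y) j = pair (A.wt x) j := by
        rw [pair_shift i j hwt]; simp only [alpha]; split_ifs <;> omega
      have h2 : A.phi j x = A.phi j y := by
        rw [hA.2.2.1 j x hj, hA.2.2.1 j y hj, h1, hpj]
      simp only [tensor]
      rw [h1, h2, hpj]
    · -- part (2)
      intro hj2
      have hj1 : i + 1 + 1 < n := by omega
      have hbp1 : B.phi (i+1) y' = ZE.ofInt 0 := by
        rw [← zero_def]
        exact (hB1 i y' hj2).1 (by rw [hbe0, ← zero_def])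
      obtain ⟨b1, hb1, hpb1⟩ :
          ∃ b1 : ℕ, B.eps (i+1) y' = ZE.ofInt b1 ∧ pair (B.wt y') (i+1) = -(b1:ℤ) := by
        rcases qc_vals hB hBsn (i+1) y' hj1 with ⟨h1, h2⟩ | ⟨a, c, h1, h2⟩
        · rw [h2] at hbp1; exact absurd hbp1 (ZEfacts.top_ne_ofInt 0)
        · refine ⟨a, h1, ?_⟩
          have hq := hB.2.2.1 (i+1) y' hj1
          rw [h1, h2, ZEfacts.add_ofInt, ZEfacts.ofInt_eq] at hq
          rw [h2, ZEfacts.ofInt_eq] at hbp1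
          omega
      have hpy1 : pair (A.wt y) (i+1) = pair (A.wt x) (i+1) - 1 := by
        rw [pair_shift i (i+1) hwt]; simp only [alpha]; split_ifs <;> omega
      have hpyi : pair (A.wt y) i = pair (A.wt x) i + 2 := by
        rw [pair_shift i i hwt]; simp only [alpha]; split_ifs <;> omega
      have hDiq : (tensor A B).eps i (y, y') = ZE.ofInt k := by
        simp only [tensor]
        rw [if_neg, hey, hbe0, hpyi, hpxi]
        · rw [ZEfacts.add_ofInt, ZEfacts.max_ofInt]
          exact ZEfacts.ofInt_eq.mpr (by omega)
        · rintro ⟨-, h2⟩; rw [hbe0, zero_def, ZEfacts.lt_iff] at h2; omega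
      have hiff := (hA2 i x y hi heA).2.1 hj2
      have hl1x := hA1 i x hj2
      have hl1y := hA1 i y hj2
      rw [hex, zero_def, ZEfacts.ofInt_eq] at hl1x
      rw [hey] at hiff hl1y
      rw [zero_def, ZEfacts.ofInt_eq] at hl1y
      have hq2x := hA.2.2.1 (i+1) x hj1
      have hq2y := hA.2.2.1 (i+1) y hj1
      rw [hpy1] at hq2y
      rw [hDiq]
      simp only [tensor]
      rcases qc_vals hA hAsn (i+1) x hj1 with ⟨hax1, hfx1⟩ | ⟨a1, f1, hax1, hfx1⟩ <;>
        rcases qc_vals hA hAsn (i+1) y hj1 with ⟨hay1, hfy1⟩ | ⟨a1', f1', hay1, hfy1⟩ <;>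
        rw [hfx1] at hl1x <;> rw [hfy1] at hl1y <;>
        rw [hax1, hay1] at hiff <;>
        rw [hax1, hfx1] at hq2x <;> rw [hay1, hfy1] at hq2y <;>
        rw [hax1, hfx1, hay1, hfy1, hb1, hpy1] <;>
        simp only [ZEfacts.add_ofInt, ZEfacts.top_add, ZEfacts.max_ofInt,
          ZEfacts.max_ofInt_top, ZEfacts.max_top_ofInt, ZEfacts.ofInt_eq,
          ZEfacts.ofInt_ne_top, ZEfacts.top_ne_ofInt, zero_def, one_def,
          ZEfacts.lt_iff, ZEfacts.lt_top, ZEfacts.le_iff] at hiff hl1x hl1y hq2x hq2y ⊢ <;>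
        split_ifs <;>
        simp_all <;>
        omega
    · -- part (3)
      intro j hj
      subst hj
      have hj1 : j + 1 < n := by omega
      have hj2 : j + 2 < n := by omega
      have hDp : (tensor A B).phi (j+1) (x, y') = ZE.ofInt (m + c0) := by
        simp only [tensor]
        rw [if_neg, hpx, hbp, hpbi]
        · rw [ZEfacts.add_ofInt, ZEfacts.max_ofInt]
          exact ZEfacts.ofInt_eq.mpr (by omega)
        · rintro ⟨-, h2⟩; rw [hbe0, zero_def, ZEfacts.lt_iff] at h2; omega
      have hiff3 := (hA2 (j+1) x y hi heA).2.2 j rfl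
      rw [hpx] at hiff3
      have hl1B := hB1 j y' hj2
      rw [hbp] at hl1B
      have hq2B := hB.2.2.1 j y' hj1
      rw [hDp]
      clear hp hC hle hwt heA hA1 hA2 hA3 hA3' hB1 hB2 hB3 hB3' hex hey hpy
      clear hpx hbp hbe hbe0 hpxi hpbi hDp hi
      simp only [tensor]
      rcases qc_vals hA hAsn j x hj1 with ⟨hax, hfx⟩ | ⟨a2, f2, hax, hfx⟩ <;>
        rcases qc_vals hA hAsn j y hj1 with ⟨hay, hfy⟩ | ⟨a2', f2', hay, hfy⟩ <;>
        rcases qc_vals hB hBsn j y' hj1 with ⟨hbx, hfb⟩ | ⟨b2, c2, hbx, hfb⟩ <;>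
        rw [hfx, hfy] at hiff3 <;>
        rw [hbx, hfb] at hq2B <;>
        rw [hbx] at hl1B <;>
        rw [hfx, hfy, hbx, hfb] <;>
        simp only [ZEfacts.add_ofInt, ZEfacts.top_add, ZEfacts.max_ofInt,
          ZEfacts.max_ofInt_top, ZEfacts.max_top_ofInt, ZEfacts.ofInt_eq,
          ZEfacts.ofInt_ne_top, ZEfacts.top_ne_ofInt, zero_def, one_def,
          ZEfacts.lt_iff, ZEfacts.lt_top, ZEfacts.le_iff] at hiff3 hl1B hq2B ⊢ <;>
        split_ifs <;>
        simp [ZEfacts.ofInt_eq, ZEfacts.ofInt_ne_top, ZEfacts.top_ne_ofInt, ZEfacts.lt_iff,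
          ZEfacts.lt_top, zero_def, one_def] at * <;>
        omega

  · -- Case B : the operator acts on the second component
    push_neg at hle
    rw [Option.map_eq_some_iff] at he
    obtain ⟨y0, heB, hp⟩ := he
    obtain ⟨rfl, rfl⟩ : y = x ∧ y' = y0 := by
      have := hp.symm; rw [Prod.mk.injEq] at this; exact this
    obtain ⟨k, m, hex, hey, hpx, hpy, hwt, hpxi⟩ := qc_edge hB hBsn hi heB
    obtain ⟨a0, c0, hax, hfax⟩ :
        ∃ a0 c0 : ℕ, A.eps i y = ZE.ofInt a0 ∧ A.phi i y = ZE.ofInt c0 := by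
      rcases qc_vals hA hAsn i y hi with ⟨h1, h2⟩ | h
      · rw [h2, hex] at hle; exact absurd hle (ZEfacts.not_top_lt _)
      · exact h
    have hc0 : c0 = 0 := by
      by_contra h
      refine hC ⟨?_, ?_⟩
      · rw [hfax, zero_def, ZEfacts.lt_iff]; omega
      · rw [hex, zero_def, ZEfacts.lt_iff]; omega
    have hfax0 : A.phi i y = ZE.ofInt 0 := by
      rw [hfax]; exact ZEfacts.ofInt_eq.mpr (by omega)
    have hpai : pair (A.wt y) i = -(a0:ℤ) := by
      have hq := hA.2.2.1 i y hi
      rw [hax, hfax0, ZEfacts.add_ofInt, ZEfacts.ofInt_eq] at hq; omega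
    refine ⟨?_, ?_, ?_⟩
    · -- part (1)
      intro j hj hfar
      have h1 := (hB2 i x' y' hi heB).1 j hj hfar
      simp only [tensor]
      rw [h1]
    · -- part (2)
      intro hj2
      have hj1 : i + 1 + 1 < n := by omega
      have hl1A := hA1 i y hj2
      rw [hax, zero_def, ZEfacts.ofInt_eq] at hl1A
      have hiff := (hB2 i x' y' hi heB).2.1 hj2
      rw [hey] at hiff
      have hDiq : (tensor A B).eps i (y, y') = ZE.ofInt (a0 + k) := by
        simp only [tensor]
        rw [if_neg, hax, hey, hpai]
        · rw [ZEfacts.add_ofInt, ZEfacts.max_ofInt]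
          exact ZEfacts.ofInt_eq.mpr (by omega)
        · rintro ⟨h1, -⟩; rw [hfax0, zero_def, ZEfacts.lt_iff] at h1; omega
      have hq2A := hA.2.2.1 (i+1) y hj1
      rw [hDiq]
      clear hp hC hle hwt heB hA1 hA2 hA3 hA3' hB1 hB2 hB3 hB3' hpx hpy hpxi
      clear hax hfax hfax0 hpai hDiq hex hey
      simp only [tensor]
      rcases qc_vals hA hAsn (i+1) y hj1 with ⟨hax1, hfx1⟩ | ⟨a1, f1, hax1, hfx1⟩ <;>
        rcases qc_vals hB hBsn (i+1) x' hj1 with ⟨hbx1, hfbx1⟩ | ⟨b1, c1, hbx1, hfbx1⟩ <;>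
        rcases qc_vals hB hBsn (i+1) y' hj1 with ⟨hby1, hfby1⟩ | ⟨b1', c1', hby1, hfby1⟩ <;>
        rw [hfx1] at hl1A <;>
        rw [hbx1, hby1] at hiff <;>
        rw [hax1, hfx1] at hq2A <;>
        rw [hax1, hfx1, hbx1, hby1] <;>
        simp only [ZEfacts.add_ofInt, ZEfacts.top_add, ZEfacts.max_ofInt,
          ZEfacts.max_ofInt_top, ZEfacts.max_top_ofInt, ZEfacts.ofInt_eq,
          ZEfacts.ofInt_ne_top, ZEfacts.top_ne_ofInt, zero_def, one_def,
          ZEfacts.lt_iff, ZEfacts.lt_top, ZEfacts.le_iff] at hl1A hiff hq2A ⊢ <;>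
        split_ifs <;>
        simp [ZEfacts.ofInt_eq, ZEfacts.ofInt_ne_top, ZEfacts.top_ne_ofInt, ZEfacts.lt_iff,
          ZEfacts.lt_top, zero_def, one_def] at * <;>
        omega
    · -- part (3)
      intro j hj
      subst hj
      have hj1 : j + 1 < n := by omega
      have hj2 : j + 2 < n := by omega
      have hl1Ax := hA1 j y hj2
      have haj : A.eps j y = ZE.ofInt 0 := by
        rw [← zero_def]; exact hl1Ax.2 (by rw [hfax0, ← zero_def])
      obtain ⟨fA, hfAj⟩ : ∃ fA : ℕ, A.phi j y = ZE.ofInt fA := by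
        rcases qc_vals hA hAsn j y hj1 with ⟨h1, h2⟩ | ⟨a, c, h1, h2⟩
        · rw [h1] at haj; exact absurd haj (ZEfacts.top_ne_ofInt 0)
        · exact ⟨c, h2⟩
      have hDp : (tensor A B).phi (j+1) (y, x') = ZE.ofInt m := by
        simp only [tensor]
        rw [if_neg, hfax0, hpx, hpxi]
        · rw [ZEfacts.add_ofInt, ZEfacts.max_ofInt]
          exact ZEfacts.ofInt_eq.mpr (by omega)
        · rintro ⟨h1, -⟩; rw [hfax0, zero_def, ZEfacts.lt_iff] at h1; omega
      have hiff3 := (hB2 (j+1) x' y' hi heB).2.2 j rfl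
      rw [hpx] at hiff3
      have hl1Bx := hB1 j x' hj2
      rw [hpx] at hl1Bx
      have hl1By := hB1 j y' hj2
      rw [hpy] at hl1By
      have hq2Bx := hB.2.2.1 j x' hj1
      have hq2By := hB.2.2.1 j y' hj1
      have hpby : pair (B.wt y') j = pair (B.wt x') j - 1 := by
        rw [pair_shift (j+1) j hwt]; simp only [alpha]; split_ifs <;> omega
      rw [hpby] at hq2By
      rw [hDp]
      clear hp hC hle hwt heB hA1 hA2 hA3 hA3' hB1 hB2 hB3 hB3' hex hey
      clear hax hfax hfax0 hpai hDp hpx hpy hpxi hl1Ax haj hi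
      simp only [tensor]
      rw [hpby]
      rcases qc_vals hB hBsn j x' hj1 with ⟨hbx, hfbx⟩ | ⟨b2, c2, hbx, hfbx⟩ <;>
        rcases qc_vals hB hBsn j y' hj1 with ⟨hby, hfby⟩ | ⟨b2', c2', hby, hfby⟩ <;>
        rw [hbx, hfbx] at hq2Bx <;> rw [hby, hfby] at hq2By <;>
        rw [hbx] at hl1Bx <;> rw [hby] at hl1By <;>
        rw [hfbx, hfby] at hiff3 <;>
        rw [hfAj, hbx, hfbx, hby, hfby] <;>
        simp only [ZEfacts.add_ofInt, ZEfacts.top_add, ZEfacts.max_ofInt,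
          ZEfacts.max_ofInt_top, ZEfacts.max_top_ofInt, ZEfacts.ofInt_eq,
          ZEfacts.ofInt_ne_top, ZEfacts.top_ne_ofInt, zero_def, one_def,
          ZEfacts.lt_iff, ZEfacts.lt_top, ZEfacts.le_iff] at hiff3 hl1Bx hl1By hq2Bx hq2By ⊢ <;>
        split_ifs <;>
        simp [ZEfacts.ofInt_eq, ZEfacts.ofInt_ne_top, ZEfacts.top_ne_ofInt, ZEfacts.lt_iff,
          ZEfacts.lt_top, zero_def, one_def] at * <;>
        omega
end
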